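/- Rigidity for the charged Penrose inequality (equality case of Theorem 1.1, radial form). Let n ≥ 3, λ ≥ 0, r₊ > 0, and let V, k_I, k_S, E_I be spherically symmetric charged radial data on [r₊,∞) satisfying the radial Einstein–Maxwell constraint equations with uncharged energy density μ̂ and radial momentum density Ĵ_ν and the Gauss law, with charge q. Assume the dominant energy condition μ̂(r) ≥ |Ĵ_ν(r)| and the outermost condition H(r) > |k_S(r)| for all r > r₊. If the charged Hawking mass is constant, m_CH(r) = E for all r ∈ [r₊,∞), then μ̂(r) = 0 and Ĵ_ν(r) = 0 for all r > r₊, and V(r) = 1 − 2E/r^{n−2} + q²/r^{2(n−2)} + λ·r² + r²·k_S(r)²/(n−1)² for all r ≥ r₊ (i.e. V = V_RN + (r·k_S/(n−1))² with Reissner–Nordström mass E and charge q). -/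

import Mathlib

/-!
Constancy of the charged Hawking mass is an algebraic identity for `V`: it gives the formula
for `V` at once and, differentiated, expresses the scalar curvature through `k_S`, `k_S'`, `λ`
and `q`. By the Gauss law the electric energy `2 V E_I²` cancels the charge term exactly, so the
Hamiltonian constraint collapses to `16π μ̂ = 2 k_S (k_I - k_S/(n-1) - r k_S'/(n-1))`, which by
the momentum constraint reads `H μ̂ = k_S Ĵ_ν`. Since `|k_S| < H` and `|Ĵ_ν| ≤ μ̂`, this forces
`Ĵ_ν = 0` and then `μ̂ = 0`.
-/

open Real Filter

/-- Mean curvature of the coordinate sphere of radius `r`: `H = (n-1)√(V r)/r`. -/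
noncomputable def sphMeanCurv (n : ℕ) (V : ℝ → ℝ) (r : ℝ) : ℝ :=
  ((n : ℝ) - 1) * Real.sqrt (V r) / r

/-- Scalar curvature of `g = V⁻¹dr² + r²·(round metric)`:
`R = (n-1) r^{1-n} (d/dr)[r^{n-2}(1 - V)]`. -/
noncomputable def sphScalCurv (n : ℕ) (V : ℝ → ℝ) (r : ℝ) : ℝ :=
  ((n : ℝ) - 1) / r ^ (n - 1) * deriv (fun ρ => ρ ^ (n - 2) * (1 - V ρ)) r

/-- The charged Hawking mass
`m_CH(r) = (r^{n-2}/2)[1 - V + r² k_S²/(n-1)²] + λ r^n/2 + q²/(2 r^{n-2})`. -/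
noncomputable def chargedHawkingMass (n : ℕ) (lam q : ℝ) (V kS : ℝ → ℝ) (r : ℝ) : ℝ :=
  r ^ (n - 2) / 2 * (1 - V r + r ^ 2 * kS r ^ 2 / ((n : ℝ) - 1) ^ 2)
    + lam * r ^ n / 2 + q ^ 2 / (2 * r ^ (n - 2))

open Topology

section Radial

variable {n : ℕ} {lam q E : ℝ} {V kS : ℝ → ℝ}

theorem pow_mul_one_sub_eq_of_chargedHawkingMass_eq (hn : 2 ≤ n) {r : ℝ}
    (h : chargedHawkingMass n lam q V kS r = E) :
    r ^ (n - 2) * (1 - V r) =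
      2 * E - q ^ 2 / r ^ (n - 2) - lam * r ^ n - r ^ n * kS r ^ 2 / ((n : ℝ) - 1) ^ 2 := by
  obtain ⟨k, rfl⟩ := Nat.exists_eq_add_of_le' hn
  rw [← h, chargedHawkingMass, Nat.add_sub_cancel]
  ring

theorem apply_eq_of_chargedHawkingMass_eq (hn : 2 ≤ n) {r : ℝ} (hr : r ≠ 0)
    (h : chargedHawkingMass n lam q V kS r = E) :
    V r = 1 - 2 * E / r ^ (n - 2) + q ^ 2 / r ^ (2 * (n - 2)) + lam * r ^ 2
      + r ^ 2 * kS r ^ 2 / ((n : ℝ) - 1) ^ 2 := by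
  have h' := pow_mul_one_sub_eq_of_chargedHawkingMass_eq hn h
  obtain ⟨k, rfl⟩ := Nat.exists_eq_add_of_le' hn
  rw [Nat.add_sub_cancel] at h' ⊢
  rw [pow_mul']
  field_simp at h' ⊢
  linear_combination -h'

theorem sphScalCurv_eq_of_chargedHawkingMass_eq (hn : 3 ≤ n) {r : ℝ} (hr : r ≠ 0)
    (hkS : DifferentiableAt ℝ kS r)
    (h : ∀ᶠ ρ in 𝓝 r, chargedHawkingMass n lam q V kS ρ = E) :
    sphScalCurv n V r = ((n : ℝ) - 1) * ((n : ℝ) - 2) * q ^ 2 / r ^ (2 * (n - 1))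
      - n * ((n : ℝ) - 1) * lam
      - (n * kS r ^ 2 + 2 * r * kS r * deriv kS r) / ((n : ℝ) - 1) := by
  have hev : (fun ρ ↦ ρ ^ (n - 2) * (1 - V ρ)) =ᶠ[𝓝 r] fun ρ ↦
      2 * E - q ^ 2 / ρ ^ (n - 2) - lam * ρ ^ n - ρ ^ n * kS ρ ^ 2 / ((n : ℝ) - 1) ^ 2 :=
    h.mono fun ρ ↦ pow_mul_one_sub_eq_of_chargedHawkingMass_eq (by omega)
  obtain ⟨k, rfl⟩ := Nat.exists_eq_add_of_le' hn
  have hderiv := ((((hasDerivAt_const r (2 * E)).sub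
    (((hasDerivAt_pow (k + 1) r).inv (pow_ne_zero _ hr)).const_mul (q ^ 2))).sub
    ((hasDerivAt_pow (k + 3) r).const_mul lam)).sub
    (((hasDerivAt_pow (k + 3) r).mul (hkS.hasDerivAt.pow 2)).div_const
      ((((k + 3 : ℕ) : ℝ) - 1) ^ 2)))
  have hc : ((k + 3 : ℕ) : ℝ) - 1 = k + 2 := by push_cast; ring
  rw [sphScalCurv]
  simp only [show k + 3 - 2 = k + 1 from rfl, show k + 3 - 1 = k + 2 from rfl,
    show k + 1 - 1 = k from rfl, div_eq_mul_inv, Pi.pow_apply, hc] at hev hderiv ⊢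
  rw [(hderiv.congr_of_eventuallyEq hev).deriv]
  push_cast
  field_simp
  ring

end Radial

theorem two_mul_mul_sq_eq_of_gauss {n : ℕ} (hn : 3 ≤ n) {r v e q : ℝ} (hr : r ≠ 0) (hv : 0 ≤ v)
    (h : √(2 / (((n : ℝ) - 1) * ((n : ℝ) - 2))) * r ^ (n - 1) * √v * e = q) :
    2 * v * e ^ 2 = ((n : ℝ) - 1) * ((n : ℝ) - 2) * q ^ 2 / r ^ (2 * (n - 1)) := by
  have hn' : (0 : ℝ) < ((n : ℝ) - 1) * ((n : ℝ) - 2) := by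
    have : (3 : ℝ) ≤ n := by exact_mod_cast hn
    nlinarith
  -- an opaque `c` keeps `field_simp` from cancelling the product factor by factor
  set c := ((n : ℝ) - 1) * ((n : ℝ) - 2)
  rw [← h, mul_pow, mul_pow, mul_pow, Real.sq_sqrt (div_nonneg zero_le_two hn'.le), Real.sq_sqrt hv, pow_mul']
  field_simp

theorem eq_zero_and_eq_zero_of_mul_eq_mul_of_abs_lt {a b m j : ℝ} (hb : |b| < a) (hj : |j| ≤ m)
    (h : a * m = b * j) : m = 0 ∧ j = 0 := by
  have ha : 0 < a := (abs_nonneg b).trans_lt hb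
  have hj0 : j = 0 := by
    by_contra hne
    have hbj : |b| * |j| < a * |j| := mul_lt_mul_of_pos_right hb (abs_pos.2 hne)
    have haj : a * |j| ≤ a * m := mul_le_mul_of_nonneg_left hj ha.le
    have hbj' : b * j ≤ |b| * |j| := (le_abs_self (b * j)).trans_eq (abs_mul b j)
    linarith
  subst hj0
  exact ⟨(mul_eq_zero.1 (h.trans (mul_zero b))).resolve_left ha.ne', rfl⟩

theorem charged_penrose_rigidity (n : ℕ) (hn : 3 ≤ n) (lam rp : ℝ)
    (hrp : 0 < rp) (V kI kS EI μ J : ℝ → ℝ) (q E : ℝ)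
    (hV0 : ∀ r, rp ≤ r → 0 ≤ V r)
    (hkSd : ∀ r, rp < r → DifferentiableAt ℝ kS r)
    -- Hamiltonian constraint
    (hmu : ∀ r, rp < r → 16 * π * μ r =
      sphScalCurv n V r + (kI r + kS r) ^ 2 - kI r ^ 2 - kS r ^ 2 / ((n : ℝ) - 1)
        - 2 * V r * EI r ^ 2 + (n : ℝ) * ((n : ℝ) - 1) * lam)
    -- momentum constraint
    (hJ : ∀ r, rp < r → 8 * π * J r =
      sphMeanCurv n V r *
        (kI r - kS r / ((n : ℝ) - 1) - r * deriv kS r / ((n : ℝ) - 1)))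
    -- Gauss law with charge `q`
    (hq : ∀ r, rp ≤ r →
      Real.sqrt (2 / (((n : ℝ) - 1) * ((n : ℝ) - 2))) * r ^ (n - 1) * Real.sqrt (V r) * EI r
        = q)
    -- dominant energy condition
    (hDEC : ∀ r, rp < r → |J r| ≤ μ r)
    -- outermost condition
    (hout : ∀ r, rp < r → |kS r| < sphMeanCurv n V r)
    -- equality case: the charged Hawking mass is constant, equal to `E`
    (hconst : ∀ r, rp ≤ r → chargedHawkingMass n lam q V kS r = E) :
    (∀ r, rp < r → μ r = 0 ∧ J r = 0) ∧
    (∀ r, rp ≤ r → V r =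
      1 - 2 * E / r ^ (n - 2) + q ^ 2 / r ^ (2 * (n - 2)) + lam * r ^ 2
        + r ^ 2 * kS r ^ 2 / ((n : ℝ) - 1) ^ 2) := by
  refine ⟨fun r hr ↦ ?_, fun r hr ↦
    apply_eq_of_chargedHawkingMass_eq (by omega) (hrp.trans_le hr).ne' (hconst r hr)⟩
  have hr0 : r ≠ 0 := (hrp.trans hr).ne'
  have hn1 : (n : ℝ) - 1 ≠ 0 := by
    have : (3 : ℝ) ≤ n := by exact_mod_cast hn
    linarith
  have hR := sphScalCurv_eq_of_chargedHawkingMass_eq hn hr0 (hkSd r hr)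
    (eventually_of_mem (Ioi_mem_nhds hr) fun ρ hρ ↦ hconst ρ (le_of_lt hρ))
  have hEI := two_mul_mul_sq_eq_of_gauss hn hr0 (hV0 r hr.le) (hq r hr.le)
  have hμ : 16 * π * μ r =
      2 * kS r * (kI r - kS r / ((n : ℝ) - 1) - r * deriv kS r / ((n : ℝ) - 1)) := by
    rw [hmu r hr, hR, hEI]
    field_simp
    ring
  have hHμ : sphMeanCurv n V r * μ r = kS r * J r := by
    apply mul_left_cancel₀ (by positivity : (16 * π) ≠ 0)
    linear_combination sphMeanCurv n V r * hμ - 2 * kS r * hJ r hr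
  exact eq_zero_and_eq_zero_of_mul_eq_mul_of_abs_lt (hout r hr) (hDEC r hr) hHμ
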